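/- arXiv:2005.08190 — 4 statements merged into one kernel-verified Lean document; each statement's English description precedes it below -/
import Mathlib

section
/- If 3 ≤ i ≤ m, 3 ≤ j ≤ n, a_{i−2} = a_{i−1} = a_i and b_{j−2} = b_{j−1} = b_j, then D[i,j] − D[i−1,j] = D[i−1,j−1] − D[i−2,j−1] and D[i,j] − D[i,j−1] = D[i−1,j−1] − D[i−1,j−2] (that is, the differential representation satisfies DR[i,j].U = DR[i−1,j−1].U and DR[i,j].L = DR[i−1,j−1].L). -/
/-!
If `b j = b (j + 1)`, column `j` of `D` lies pointwise below column `j + 1`: induct down the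
column, using that cells `(i + 1, j)` and `(i + 1, j + 1)` have the same local cost. Transposing
gives the same for rows. Inside a plateau of both sequences the minimum of the recurrence is
therefore attained by the diagonal predecessor, `D (i + 1) (j + 1) = D i j + c`, and on a square
plateau the local cost `c` is constant, so both differences are invariant under a diagonal shift.
-/

/-- The DTW dynamic programming table recurrence for sequences `a` (length `m`)
and `b` (length `n`), both indexed from 1. -/
def DTWTable (a b : ℕ → ℝ) (m n : ℕ) (D : ℕ → ℕ → ℝ) : Prop :=
  D 1 1 = (a 1 - b 1) ^ 2 ∧
  (∀ i, 1 < i → i ≤ m → D i 1 = D (i - 1) 1 + (a i - b 1) ^ 2) ∧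
  (∀ j, 1 < j → j ≤ n → D 1 j = D 1 (j - 1) + (a 1 - b j) ^ 2) ∧
  (∀ i j, 1 < i → i ≤ m → 1 < j → j ≤ n →
    D i j = min (min (D i (j - 1)) (D (i - 1) j)) (D (i - 1) (j - 1)) + (a i - b j) ^ 2)

namespace DTWTable

variable {a b : ℕ → ℝ} {m n : ℕ} {D : ℕ → ℕ → ℝ}

theorem transpose (hD : DTWTable a b m n D) : DTWTable b a n m (fun j i => D i j) := by
  obtain ⟨h11, hrow, hcol, hrec⟩ := hD
  refine ⟨?_, fun j hj hjn => ?_, fun i hi him => ?_, fun j i hj hjn hi him => ?_⟩ <;>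
    dsimp only
  · rw [h11]; ring
  · rw [hcol j hj hjn]; ring
  · rw [hrow i hi him]; ring
  · rw [hrec i j hi him hj hjn, min_comm (D (i - 1) j)]; ring

theorem succ_succ (hD : DTWTable a b m n D) {i j : ℕ} (hi : 1 ≤ i) (him : i + 1 ≤ m)
    (hj : 1 ≤ j) (hjn : j + 1 ≤ n) :
    D (i + 1) (j + 1) =
      min (min (D (i + 1) j) (D i (j + 1))) (D i j) + (a (i + 1) - b (j + 1)) ^ 2 :=
  hD.2.2.2 (i + 1) (j + 1) (by omega) him (by omega) hjn

theorem le_prev_row_add (hD : DTWTable a b m n D) {i j : ℕ} (hi : 1 ≤ i) (him : i + 1 ≤ m)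
    (hj : 1 ≤ j) (hjn : j ≤ n) :
    D (i + 1) j ≤ D i j + (a (i + 1) - b j) ^ 2 := by
  obtain ⟨j, rfl⟩ : ∃ k, j = k + 1 := ⟨j - 1, by omega⟩
  rcases Nat.eq_zero_or_pos j with rfl | hj'
  · exact (hD.2.1 (i + 1) (by omega) him).le
  · rw [hD.succ_succ hi him hj' hjn]
    gcongr
    exact (min_le_left _ _).trans (min_le_right _ _)

theorem col_le_succ_col (hD : DTWTable a b m n D) {j : ℕ} (hj : 1 ≤ j) (hjn : j + 1 ≤ n)
    (hb : b j = b (j + 1)) {i : ℕ} (hi : 1 ≤ i) (him : i ≤ m) :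
    D i j ≤ D i (j + 1) := by
  induction i, hi using Nat.le_induction with
  | base =>
    rw [hD.2.2.1 (j + 1) (by omega) hjn, Nat.add_sub_cancel]
    exact le_add_of_nonneg_right (sq_nonneg _)
  | succ i hi ih =>
    have hstep : D (i + 1) j ≤ D i j + (a (i + 1) - b (j + 1)) ^ 2 :=
      hb ▸ hD.le_prev_row_add hi him hj (by omega)
    have hprev : D i j ≤ D i (j + 1) := ih (by omega)
    rw [hD.succ_succ hi him hj hjn, ← sub_le_iff_le_add]
    have hcost := sq_nonneg (a (i + 1) - b (j + 1))
    exact le_min (le_min (by linarith) (by linarith)) (by linarith)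

theorem row_le_succ_row (hD : DTWTable a b m n D) {i : ℕ} (hi : 1 ≤ i) (him : i + 1 ≤ m)
    (ha : a i = a (i + 1)) {j : ℕ} (hj : 1 ≤ j) (hjn : j ≤ n) :
    D i j ≤ D (i + 1) j :=
  hD.transpose.col_le_succ_col hi him ha hj hjn

theorem succ_succ_eq_of_plateau (hD : DTWTable a b m n D) {i j : ℕ} (hi : 1 ≤ i)
    (him : i + 1 ≤ m) (hj : 1 ≤ j) (hjn : j + 1 ≤ n) (ha : a i = a (i + 1))
    (hb : b j = b (j + 1)) :
    D (i + 1) (j + 1) = D i j + (a (i + 1) - b (j + 1)) ^ 2 := by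
  rw [hD.succ_succ hi him hj hjn, min_eq_right (le_min
    (hD.row_le_succ_row hi him ha hj (by omega))
    (hD.col_le_succ_col hj hjn hb hi (by omega)))]

end DTWTable

theorem stmt_5_general (a b : ℕ → ℝ) (m n : ℕ)
    (D : ℕ → ℕ → ℝ) (hD : DTWTable a b m n D) :
    ∀ i j, 3 ≤ i → i ≤ m → 3 ≤ j → j ≤ n →
      a (i - 2) = a (i - 1) → a (i - 1) = a i →
      b (j - 2) = b (j - 1) → b (j - 1) = b j →
      D i j - D (i - 1) j = D (i - 1) (j - 1) - D (i - 2) (j - 1) ∧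
      D i j - D i (j - 1) = D (i - 1) (j - 1) - D (i - 1) (j - 2) := by
  intro i j hi him hj hjn ha₁ ha₂ hb₁ hb₂
  obtain ⟨i, rfl⟩ : ∃ k, i = k + 2 := ⟨i - 2, by omega⟩
  obtain ⟨j, rfl⟩ : ∃ k, j = k + 2 := ⟨j - 2, by omega⟩
  simp only [Nat.add_sub_cancel, Nat.reduceSubDiff] at *
  have hcorner := hD.succ_succ_eq_of_plateau (i := i + 1) (j := j + 1)
    (by omega) him (by omega) hjn ha₂ hb₂
  have hup := hD.succ_succ_eq_of_plateau (i := i) (j := j + 1)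
    (by omega) (by omega) (by omega) hjn ha₁ hb₂
  have hleft := hD.succ_succ_eq_of_plateau (i := i + 1) (j := j)
    (by omega) him (by omega) (by omega) ha₂ hb₁
  rw [ha₂] at hup
  rw [hb₂] at hleft
  constructor <;> linarith

theorem stmt_5 (a b : ℕ → ℝ) (m n : ℕ) (hm : 1 ≤ m) (hn : 1 ≤ n)
    (D : ℕ → ℕ → ℝ) (hD : DTWTable a b m n D) :
    ∀ i j, 3 ≤ i → i ≤ m → 3 ≤ j → j ≤ n →
      a (i - 2) = a (i - 1) → a (i - 1) = a i →
      b (j - 2) = b (j - 1) → b (j - 1) = b j →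
      D i j - D (i - 1) j = D (i - 1) (j - 1) - D (i - 2) (j - 1) ∧
      D i j - D i (j - 1) = D (i - 1) (j - 1) - D (i - 1) (j - 2) :=
  stmt_5_general a b m n D hD
end

section
/- For every 2 ≤ j ≤ n−1 and every i with j < i ≤ m, one has (D[i,j+1] − D[i,j]) − (D′[i,j] − D′[i,j−1]) = (a_j − b_j)^2 − (a_j − b_{j+1})^2. -/
/-!
Because every `a i` exceeds every `b j`, the cost `(a i - b j) ^ 2` decreases in `i` and in `j`.
Hence, on and below the diagonal, an optimal warping path to `(i, j)` runs along the diagonal to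
`(j, j)` and then straight down column `j`; cells above the diagonal are handled by transposing
the table. With this closed form both differences in the theorem are sums over column `j + 1`
minus column `j`, and the two sums differ only in the term of row `j`.
-/

open Finset Function

def IsDTWTable (c : ℕ → ℕ → ℝ) (m n : ℕ) (D : ℕ → ℕ → ℝ) : Prop :=
  D 1 1 = c 1 1 ∧
  (∀ i, 1 < i → i ≤ m → D i 1 = D (i - 1) 1 + c i 1) ∧
  (∀ j, 1 < j → j ≤ n → D 1 j = D 1 (j - 1) + c 1 j) ∧
  (∀ i j, 1 < i → i ≤ m → 1 < j → j ≤ n →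
    D i j = min (min (D i (j - 1)) (D (i - 1) j)) (D (i - 1) (j - 1)) + c i j)

theorem DTWTable.isDTWTable {a b : ℕ → ℝ} {m n : ℕ} {D : ℕ → ℕ → ℝ} (h : DTWTable a b m n D) :
    IsDTWTable (fun i j => (a i - b j) ^ 2) m n D :=
  h

theorem IsDTWTable.swap {c : ℕ → ℕ → ℝ} {m n : ℕ} {D : ℕ → ℕ → ℝ} (h : IsDTWTable c m n D) :
    IsDTWTable (swap c) n m (swap D) := by
  obtain ⟨h11, hcol, hrow, hrec⟩ := h
  refine ⟨h11, hrow, hcol, fun j i hj hjn hi him => ?_⟩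
  simp only [Function.swap, hrec i j hi him hj hjn, min_comm (D (i - 1) j)]

/-- The cost of the warping path that follows the diagonal up to `(j, j)` and then
column `j` down to `(i, j)`. -/
noncomputable def diagColumnCost (c : ℕ → ℕ → ℝ) (i j : ℕ) : ℝ :=
  ∑ r ∈ Ico 1 j, c r r + ∑ r ∈ Icc j i, c r j

section diagColumnCost

variable (c : ℕ → ℕ → ℝ) {i j : ℕ}

theorem diagColumnCost_succ_left (h : j ≤ i + 1) :
    diagColumnCost c (i + 1) j = diagColumnCost c i j + c (i + 1) j := by
  rw [diagColumnCost, diagColumnCost, sum_Icc_succ_top h, add_assoc]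

theorem diagColumnCost_succ_right_sub (hj : 1 ≤ j) (h : j ≤ i) :
    diagColumnCost c i (j + 1) - diagColumnCost c i j =
      ∑ r ∈ Ioc j i, (c r (j + 1) - c r j) := by
  rw [diagColumnCost, diagColumnCost, sum_Ico_succ_top hj, ← add_sum_Ioc_eq_sum_Icc h,
    Icc_add_one_left_eq_Ioc, sum_sub_distrib]
  ring

theorem diagColumnCost_self_succ (hi : 1 ≤ i) :
    diagColumnCost c i (i + 1) = diagColumnCost c i i := by
  rw [← sub_eq_zero, diagColumnCost_succ_right_sub c hi le_rfl, Ioc_self, sum_empty]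

theorem diagColumnCost_swap_self : diagColumnCost (swap c) i i = diagColumnCost c i i := by
  simp [diagColumnCost, Function.swap]

end diagColumnCost

theorem IsDTWTable.eq_diagColumnCost {c : ℕ → ℕ → ℝ} {m n : ℕ} {D : ℕ → ℕ → ℝ}
    (hD : IsDTWTable c m n D) (hc : ∀ i j, 0 ≤ c i j)
    (hci : ∀ i j, 1 ≤ i → i < m → 1 ≤ j → j ≤ n → c (i + 1) j ≤ c i j)
    (hcj : ∀ i j, 1 ≤ i → i ≤ m → 1 ≤ j → j < n → c i (j + 1) ≤ c i j)
    ⦃i j : ℕ⦄ (hj : 1 ≤ j) (hji : j ≤ i) (hi : i ≤ m) (hjn : j ≤ n) :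
    D i j = diagColumnCost c i j := by
  obtain ⟨h11, hcol, -, hrec⟩ := id hD
  obtain ⟨i, rfl⟩ : ∃ i', i = i' + 1 := ⟨i - 1, by omega⟩
  obtain rfl | ⟨j, rfl, hjpos⟩ : j = 1 ∨ ∃ j', j = j' + 1 ∧ 1 ≤ j' := by
    rcases j with _ | _ | j <;> simp_all
  · rcases Nat.eq_zero_or_pos i with rfl | hi0
    · simp [h11, diagColumnCost]
    · rw [hcol (i + 1) (by omega) hi, Nat.add_sub_cancel, diagColumnCost_succ_left c (by omega),
        hD.eq_diagColumnCost hc hci hcj le_rfl hi0 (by omega) hjn]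
  have hcorner : D i j = diagColumnCost c i j :=
    hD.eq_diagColumnCost hc hci hcj hjpos (by omega) (by omega) (by omega)
  have hleft : D (i + 1) j = diagColumnCost c i j + c (i + 1) j := by
    rw [hD.eq_diagColumnCost hc hci hcj hjpos (by omega) hi (by omega),
      diagColumnCost_succ_left c (by omega)]
  have hup : min (D i (j + 1)) (D i j) = diagColumnCost c i (j + 1) := by
    rcases (show j < i ∨ j = i by omega) with hlt | rfl
    · rw [hD.eq_diagColumnCost hc hci hcj (by omega) hlt (by omega) hjn, hcorner, min_eq_left]
      rw [← sub_nonpos, diagColumnCost_succ_right_sub c hjpos hlt.le]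
      refine sum_nonpos fun r hr => sub_nonpos.2 (hcj r j ?_ ?_ hjpos (by omega)) <;>
        simp only [mem_Ioc] at hr <;> omega
    · -- the cell above the diagonal lies below the diagonal of the transposed table
      have hT : D j (j + 1) = diagColumnCost c j j + c j (j + 1) := by
        rw [← diagColumnCost_swap_self, show D j (j + 1) = Function.swap D (j + 1) j from rfl,
          hD.swap.eq_diagColumnCost (fun i j => hc j i)
            (fun i j hi hin hj hjm => hcj j i hj hjm hi hin)
            (fun i j hi hin hj hjm => hci j i hj hjm hi hin) hjpos (by omega) hjn (by omega),
          diagColumnCost_succ_left _ (by omega)]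
      rw [hT, hcorner, diagColumnCost_self_succ c hjpos, min_eq_right (by linarith [hc j (j + 1)])]
  rw [hrec (i + 1) (j + 1) (by omega) hi (by omega) hjn, Nat.add_sub_cancel, Nat.add_sub_cancel,
    hleft, min_assoc, hup, min_eq_right, diagColumnCost_succ_left c (by omega)]
  have hle : diagColumnCost c i (j + 1) ≤ diagColumnCost c i j := hup ▸ hcorner ▸ min_le_right _ _
  linarith [hc (i + 1) j]
termination_by i + j

theorem sq_sub_le_sq_sub {x x' y y' : ℝ} (hx : x' ≤ x) (hy : y ≤ y') (h : y' < x') :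
    (x' - y') ^ 2 ≤ (x - y) ^ 2 :=
  pow_le_pow_left₀ (by linarith) (by linarith) 2

theorem DTWTable.eq_diagColumnCost {a b : ℕ → ℝ} {m n : ℕ} {D : ℕ → ℕ → ℝ}
    (hD : DTWTable a b m n D) (hA : ∀ i, 1 ≤ i → i < m → a (i + 1) ≤ a i)
    (hB : ∀ j, 1 ≤ j → j < n → b j ≤ b (j + 1)) (hAB : b n < a m) ⦃i j : ℕ⦄
    (hj : 1 ≤ j) (hji : j ≤ i) (hi : i ≤ m) (hjn : j ≤ n) :
    D i j = diagColumnCost (fun i j => (a i - b j) ^ 2) i j := by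
  have ha : AntitoneOn a (Set.Icc 1 m) := antitoneOn_of_add_one_le Set.ordConnected_Icc
    fun i _ hi hi1 => hA i hi.1 (by simp only [Set.mem_Icc] at hi1; omega)
  have hb : MonotoneOn b (Set.Icc 1 n) := monotoneOn_of_le_add_one Set.ordConnected_Icc
    fun j _ hj hj1 => hB j hj.1 (by simp only [Set.mem_Icc] at hj1; omega)
  have hba : ∀ i j, 1 ≤ i → i ≤ m → 1 ≤ j → j ≤ n → b j < a i := fun i j hi him hj hjn =>
    calc b j ≤ b n := hb ⟨hj, hjn⟩ ⟨by omega, le_rfl⟩ hjn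
      _ < a m := hAB
      _ ≤ a i := ha ⟨hi, him⟩ ⟨by omega, le_rfl⟩ him
  exact hD.isDTWTable.eq_diagColumnCost (fun _ _ => sq_nonneg _)
    (fun i j hi him hj hjn => sq_sub_le_sq_sub (hA i hi him) le_rfl (hba _ _ (by omega) him hj hjn))
    (fun i j hi him hj hjn => sq_sub_le_sq_sub le_rfl (hB j hj hjn) (hba _ _ hi him (by omega) hjn))
    hj hji hi hjn

theorem stmt_12_general (a b : ℕ → ℝ) (m n : ℕ)
    (D D' : ℕ → ℕ → ℝ) (hD : DTWTable a b m n D)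
    (hD' : DTWTable a (fun j => b (j + 1)) m (n - 1) D')
    (hA : ∀ i, 1 ≤ i → i < m → a (i + 1) ≤ a i)
    (hB : ∀ j, 1 ≤ j → j < n → b j ≤ b (j + 1))
    (hAB : b n < a m) :
    ∀ j i, 2 ≤ j → j ≤ n - 1 → j < i → i ≤ m →
      (D i (j + 1) - D i j) - (D' i j - D' i (j - 1))
        = (a j - b j) ^ 2 - (a j - b (j + 1)) ^ 2 := by
  intro j i hj hjn hji him
  obtain ⟨j, rfl⟩ : ∃ j', j = j' + 1 := ⟨j - 1, by omega⟩
  have hC := hD.eq_diagColumnCost hA hB hAB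
  have hC' := hD'.eq_diagColumnCost hA (fun j hj hjn => hB (j + 1) (by omega) (by omega))
    (by rwa [Nat.sub_add_cancel (by omega)])
  rw [hC (by omega) hji him (by omega), hC (by omega) (by omega) him (by omega),
    hC' (by omega) (by omega) him (by omega), hC' (by omega) (by omega) him (by omega),
    Nat.add_sub_cancel, diagColumnCost_succ_right_sub _ (by omega) (by omega),
    diagColumnCost_succ_right_sub _ (by omega) (by omega),
    ← sum_Ioc_consecutive _ (Nat.le_succ j) (by omega : j + 1 ≤ i), Nat.Ioc_succ_singleton,
    sum_singleton]
  ring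

theorem stmt_12 (a b : ℕ → ℝ) (m n : ℕ) (hm : 2 ≤ m) (hn : 3 ≤ n)
    (D D' : ℕ → ℕ → ℝ) (hD : DTWTable a b m n D)
    (hD' : DTWTable a (fun j => b (j + 1)) m (n - 1) D')
    (hA : ∀ i, 1 ≤ i → i < m → a (i + 1) ≤ a i)
    (hB : ∀ j, 1 ≤ j → j < n → b j ≤ b (j + 1))
    (hAB : b n < a m) :
    ∀ j i, 2 ≤ j → j ≤ n - 1 → j < i → i ≤ m →
      (D i (j + 1) - D i j) - (D' i j - D' i (j - 1))
        = (a j - b j) ^ 2 - (a j - b (j + 1)) ^ 2 :=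
  stmt_12_general a b m n D D' hD hD' hA hB hAB
end

section
/- For every 2 ≤ j ≤ n−1 and every i with j < i ≤ m, if b_j ≠ b_{j+1}, then D[i,j+1] − D[i,j] ≠ D′[i,j] − D′[i,j−1]. -/
open Finset

theorem DTWTable.unique {a b : ℕ → ℝ} {m n : ℕ} {D E : ℕ → ℕ → ℝ}
    (hD : DTWTable a b m n D) (hE : DTWTable a b m n E) ⦃i j : ℕ⦄
    (hi : 1 ≤ i) (him : i ≤ m) (hj : 1 ≤ j) (hjn : j ≤ n) : D i j = E i j := by
  obtain ⟨hD11, hDcol, hDrow, hDrec⟩ := hD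
  obtain ⟨hE11, hEcol, hErow, hErec⟩ := hE
  induction i, hi using Nat.le_induction generalizing j with
  | base =>
    induction j, hj using Nat.le_induction with
    | base => rw [hD11, hE11]
    | succ j hj ih =>
      rw [hDrow (j + 1) (by omega) hjn, hErow (j + 1) (by omega) hjn, Nat.add_sub_cancel,
        ih (by omega)]
  | succ i hi ihi =>
    induction j, hj using Nat.le_induction with
    | base =>
      rw [hDcol (i + 1) (by omega) him, hEcol (i + 1) (by omega) him, Nat.add_sub_cancel,
        ihi (by omega) le_rfl hjn]
    | succ j hj ihj =>
      rw [hDrec (i + 1) (j + 1) (by omega) him (by omega) hjn,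
        hErec (i + 1) (j + 1) (by omega) him (by omega) hjn, Nat.add_sub_cancel,
        Nat.add_sub_cancel, ihj (by omega), ihi (by omega) (by omega) hjn,
        ihi (by omega) hj (by omega)]

lemma Finset.sum_Ioc_eq_add_sum_Ioc_succ {M : Type*} [AddCommMonoid M] (f : ℕ → M) {k i : ℕ}
    (h : k < i) : ∑ r ∈ Ioc k i, f r = f (k + 1) + ∑ r ∈ Ioc (k + 1) i, f r := by
  rw [← sum_Ioc_consecutive f (Nat.le_succ k) h, Nat.Ioc_succ_singleton, sum_singleton]

/-- The cost of the warping path to `(i, j)` that runs along the diagonal up to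
`(min i j, min i j)` and then straight down its column or along its row. -/
noncomputable def dtwDiagonalPathCost (a b : ℕ → ℝ) (i j : ℕ) : ℝ :=
  ∑ r ∈ Ioc 0 (min i j), (a r - b r) ^ 2 + ∑ r ∈ Ioc j i, (a r - b j) ^ 2
    + ∑ s ∈ Ioc i j, (a i - b s) ^ 2

namespace dtwDiagonalPathCost

variable (a b : ℕ → ℝ) {i j : ℕ}

local notation "F" => dtwDiagonalPathCost a b

lemma of_le (h : j ≤ i) :
    F i j = ∑ r ∈ Ioc 0 j, (a r - b r) ^ 2 + ∑ r ∈ Ioc j i, (a r - b j) ^ 2 := by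
  rw [dtwDiagonalPathCost, min_eq_right h, Ioc_eq_empty_of_le h, sum_empty, add_zero]

lemma of_ge (h : i ≤ j) :
    F i j = ∑ r ∈ Ioc 0 i, (a r - b r) ^ 2 + ∑ s ∈ Ioc i j, (a i - b s) ^ 2 := by
  rw [dtwDiagonalPathCost, min_eq_left h, Ioc_eq_empty_of_le h, sum_empty, add_zero]

lemma succ_succ_self (k : ℕ) : F (k + 1) (k + 1) = F k k + (a (k + 1) - b (k + 1)) ^ 2 := by
  rw [of_le a b le_rfl, of_le a b le_rfl, Ioc_self, Ioc_self, sum_Ioc_succ_top (Nat.zero_le k)]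
  ring

lemma succ_left (h : j ≤ i) : F (i + 1) j = F i j + (a (i + 1) - b j) ^ 2 := by
  rw [of_le a b h, of_le a b (h.trans i.le_succ), sum_Ioc_succ_top h]
  ring

lemma succ_right (h : i ≤ j) : F i (j + 1) = F i j + (a i - b (j + 1)) ^ 2 := by
  rw [of_ge a b h, of_ge a b (h.trans j.le_succ), sum_Ioc_succ_top h]
  ring

lemma le_succ_left (h : j ≤ i) : F i j ≤ F (i + 1) j := by
  rw [succ_left a b h]
  exact le_add_of_nonneg_right (sq_nonneg _)

lemma le_succ_right (h : i ≤ j) : F i j ≤ F i (j + 1) := by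
  rw [succ_right a b h]
  exact le_add_of_nonneg_right (sq_nonneg _)

lemma succ_right_sub (h : j < i) :
    F i (j + 1) - F i j = ∑ r ∈ Ioc j i, ((a r - b (j + 1)) ^ 2 - (a r - b j) ^ 2) := by
  have h' : j + 1 ≤ i := h
  rw [of_le a b h', of_le a b h.le, sum_Ioc_succ_top (Nat.zero_le j)]
  simp only [sum_Ioc_eq_add_sum_Ioc_succ _ h, sum_sub_distrib]
  ring

lemma succ_left_sub (h : i < j) :
    F (i + 1) j - F i j = ∑ s ∈ Ioc i j, ((a (i + 1) - b s) ^ 2 - (a i - b s) ^ 2) := by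
  have h' : i + 1 ≤ j := h
  rw [of_ge a b h', of_ge a b h.le, sum_Ioc_succ_top (Nat.zero_le i)]
  simp only [sum_Ioc_eq_add_sum_Ioc_succ _ h, sum_sub_distrib]
  ring

lemma succ_right_le (h : j < i) (hb : b j ≤ b (j + 1))
    (hab : ∀ r ∈ Ioc j i, b (j + 1) ≤ a r) :
    F i (j + 1) ≤ F i j := by
  refine sub_nonpos.mp ((succ_right_sub a b h).trans_le (sum_nonpos fun r hr => ?_))
  have := hab r hr
  nlinarith

lemma succ_left_le (h : i < j) (ha : a (i + 1) ≤ a i)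
    (hab : ∀ s ∈ Ioc i j, b s ≤ a (i + 1)) :
    F (i + 1) j ≤ F i j := by
  refine sub_nonpos.mp ((succ_left_sub a b h).trans_le (sum_nonpos fun s hs => ?_))
  have := hab s hs
  nlinarith

variable {m n : ℕ}
  (ha : ∀ i, 1 ≤ i → i < m → a (i + 1) ≤ a i)
  (hb : ∀ j, 1 ≤ j → j < n → b j ≤ b (j + 1))
  (hab : ∀ i j, 1 ≤ i → i ≤ m → 1 ≤ j → j ≤ n → b j ≤ a i)
include ha hb hab

lemma eq_min_add {i j : ℕ} (hi : 1 ≤ i) (him : i + 1 ≤ m) (hj : 1 ≤ j) (hjn : j + 1 ≤ n) :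
    F (i + 1) (j + 1) = min (min (F (i + 1) j) (F i (j + 1))) (F i j)
      + (a (i + 1) - b (j + 1)) ^ 2 := by
  rcases lt_trichotomy j i with hji | rfl | hij
  · have h₁ : F i (j + 1) ≤ F i j := succ_right_le a b hji (hb j hj (by omega))
      fun r hr => hab r (j + 1) (by grind) (by grind) (by omega) hjn
    rw [min_eq_right (h₁.trans (le_succ_left a b hji.le)), min_eq_left h₁,
      succ_left a b hji]
  · rw [min_eq_right (le_min (le_succ_left a b le_rfl) (le_succ_right a b le_rfl)),
      succ_succ_self]
  · have h₁ : F (i + 1) j ≤ F i j := succ_left_le a b hij (ha i hi (by omega))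
      fun s hs => hab (i + 1) s (by omega) him (by grind) (by grind)
    rw [min_eq_left (h₁.trans (le_succ_right a b hij.le)), min_eq_left h₁,
      succ_right a b hij]

theorem isDTWTable : DTWTable a b m n F := by
  refine ⟨?_, fun i hi him => ?_, fun j hj hjn => ?_, fun i j hi him hj hjn => ?_⟩
  · simp [of_le a b le_rfl]
  · obtain ⟨i, rfl⟩ : ∃ k, i = k + 1 := ⟨i - 1, by omega⟩
    exact succ_left a b (by omega)
  · obtain ⟨j, rfl⟩ : ∃ k, j = k + 1 := ⟨j - 1, by omega⟩
    exact succ_right a b (by omega)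
  · obtain ⟨i, rfl⟩ : ∃ k, i = k + 1 := ⟨i - 1, by omega⟩
    obtain ⟨j, rfl⟩ : ∃ k, j = k + 1 := ⟨j - 1, by omega⟩
    exact eq_min_add a b ha hb hab (by omega) him (by omega) hjn

end dtwDiagonalPathCost

theorem le_of_antitone_steps_of_monotone_steps {a b : ℕ → ℝ} {m n : ℕ}
    (ha : ∀ i, 1 ≤ i → i < m → a (i + 1) ≤ a i)
    (hb : ∀ j, 1 ≤ j → j < n → b j ≤ b (j + 1)) (hab : b n ≤ a m) :
    ∀ i j, 1 ≤ i → i ≤ m → 1 ≤ j → j ≤ n → b j ≤ a i := by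
  have hb_mono : MonotoneOn b (Set.Icc 1 n) := monotoneOn_of_le_succ Set.ordConnected_Icc
    fun k _ hk hk₁ => by
      simp only [Set.mem_Icc, Order.succ_eq_add_one] at hk hk₁
      exact hb k hk.1 (by omega)
  have ha_anti : AntitoneOn a (Set.Icc 1 m) := antitoneOn_of_succ_le Set.ordConnected_Icc
    fun k _ hk hk₁ => by
      simp only [Set.mem_Icc, Order.succ_eq_add_one] at hk hk₁
      exact ha k hk.1 (by omega)
  intro i j hi him hj hjn
  calc b j ≤ b n := hb_mono ⟨hj, hjn⟩ ⟨hj.trans hjn, le_rfl⟩ hjn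
    _ ≤ a m := hab
    _ ≤ a i := ha_anti ⟨hi, him⟩ ⟨hi.trans him, le_rfl⟩ him

theorem stmt_14_general (a b : ℕ → ℝ) (m n : ℕ)
    (D D' : ℕ → ℕ → ℝ) (hD : DTWTable a b m n D)
    (hD' : DTWTable a (fun j => b (j + 1)) m (n - 1) D')
    (hA : ∀ i, 1 ≤ i → i < m → a (i + 1) ≤ a i)
    (hB : ∀ j, 1 ≤ j → j < n → b j ≤ b (j + 1))
    (hAB : b n < a m) :
    ∀ j i, 2 ≤ j → j ≤ n - 1 → j < i → i ≤ m → b j ≠ b (j + 1) →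
      D i (j + 1) - D i j ≠ D' i j - D' i (j - 1) := by
  intro j i hj2 hjn hji him hne
  have hab := le_of_antitone_steps_of_monotone_steps hA hB hAB.le
  have hF := hD.unique (dtwDiagonalPathCost.isDTWTable a b hA hB hab)
  have hF' := hD'.unique (dtwDiagonalPathCost.isDTWTable a (fun j => b (j + 1)) hA
    (fun j hj hjn => hB (j + 1) (by omega) (by omega))
    fun i j hi him hj hjn => hab i (j + 1) hi him (by omega) (by omega))
  obtain ⟨k, rfl⟩ : ∃ k, j = k + 1 := ⟨j - 1, by omega⟩
  rw [Nat.add_sub_cancel, hF (by omega) him (by omega) (by omega),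
    hF (by omega) him (by omega) (by omega), hF' (by omega) him (by omega) (by omega),
    hF' (by omega) him (by omega) (by omega), dtwDiagonalPathCost.succ_right_sub _ _ hji,
    dtwDiagonalPathCost.succ_right_sub _ _ (by omega),
    sum_Ioc_eq_add_sum_Ioc_succ _ (by omega : k < i)]
  have hlt : b (k + 1) < b (k + 2) := lt_of_le_of_ne (hB (k + 1) (by omega) (by omega)) hne
  have hle : b (k + 2) ≤ a (k + 1) :=
    hab (k + 1) (k + 2) (by omega) (by omega) (by omega) (by omega)
  have hgap : (a (k + 1) - b (k + 2)) ^ 2 < (a (k + 1) - b (k + 1)) ^ 2 := by nlinarith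
  exact fun h => by linarith

theorem stmt_14 (a b : ℕ → ℝ) (m n : ℕ) (hm : 2 ≤ m) (hn : 3 ≤ n)
    (D D' : ℕ → ℕ → ℝ) (hD : DTWTable a b m n D)
    (hD' : DTWTable a (fun j => b (j + 1)) m (n - 1) D')
    (hA : ∀ i, 1 ≤ i → i < m → a (i + 1) ≤ a i)
    (hB : ∀ j, 1 ≤ j → j < n → b j ≤ b (j + 1))
    (hAB : b n < a m) :
    ∀ j i, 2 ≤ j → j ≤ n - 1 → j < i → i ≤ m → b j ≠ b (j + 1) →
      D i (j + 1) - D i j ≠ D' i j - D' i (j - 1) :=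
  stmt_14_general a b m n D D' hD hD' hA hB hAB
end

section
/- The number of pairs (i,j) with 2 ≤ i ≤ m and 2 ≤ j ≤ n−1 such that D[i,j+1] − D[i−1,j+1] ≠ D′[i,j] − D′[i−1,j] or D[i,j+1] − D[i,j] ≠ D′[i,j] − D′[i,j−1] is at least Σ_{I=1}^{M−1} max(n − 2 − I·k, 0) + Σ_{J=1}^{N−1} max(m − J·l, 0). -/
/-!
If `a` is non-increasing, `b` is non-decreasing and every `a i` lies above every `b j`, then an
optimal warping path to `(i, j)` runs diagonally from `(1, 1)` and then straight, so the DTW table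
has the closed form `diagPathCost`. Its increments along a row or a column are then explicit sums,
and deleting `b 1` shifts these sums by one index: the increments of `D` and `D'` differ by a single
term, `(a i - b i) ^ 2 - (a (i - 1) - b i) ^ 2` for rows, which is nonzero exactly where `a` drops,
and symmetrically for columns where `b` rises. Each drop of `a` between runs `I` and `I + 1` yields
the cells `(I k + 1, j)` with `j ≥ I k + 2`, and each rise of `b` between runs `J` and `J + 1` the
cells `(i, J l)` with `i > J l`.
-/

open Finset

/-- The cost of the warping path from `(1, 1)` to `(i, j)` that moves diagonally until it reaches
row `i` or column `j`, and then straight along it. -/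
noncomputable def diagPathCost (a b : ℕ → ℝ) (i j : ℕ) : ℝ :=
  ∑ t ∈ Icc 1 (max i j), (a (min t i) - b (min t j)) ^ 2

section diagPathCost

variable {a b : ℕ → ℝ} {i j : ℕ}

lemma diagPathCost_swap (a b : ℕ → ℝ) (i j : ℕ) :
    diagPathCost a b i j = diagPathCost (-b) (-a) j i := by
  rw [diagPathCost, diagPathCost, max_comm]
  exact sum_congr rfl fun t _ => by simp only [Pi.neg_apply]; ring

lemma diagPathCost_one_one : diagPathCost a b 1 1 = (a 1 - b 1) ^ 2 := by
  simp [diagPathCost]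

lemma diagPathCost_succ_right (hij : i ≤ j) :
    diagPathCost a b i (j + 1) = diagPathCost a b i j + (a i - b (j + 1)) ^ 2 := by
  rw [diagPathCost, diagPathCost, max_eq_right (hij.trans j.le_succ), max_eq_right hij,
    sum_Icc_succ_top (by omega), min_eq_right (by omega), min_self]
  congr 1
  refine sum_congr rfl fun t ht => ?_
  have := (mem_Icc.1 ht).2
  rw [min_eq_left (by omega : t ≤ j + 1), min_eq_left this]

lemma diagPathCost_succ_left (hji : j ≤ i) :
    diagPathCost a b (i + 1) j = diagPathCost a b i j + (a (i + 1) - b j) ^ 2 := by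
  rw [diagPathCost_swap a b, diagPathCost_swap a b, diagPathCost_succ_right hji]
  simp only [Pi.neg_apply]
  ring

lemma diagPathCost_succ_succ :
    diagPathCost a b (i + 1) (i + 1) = diagPathCost a b i i + (a (i + 1) - b (i + 1)) ^ 2 := by
  rw [diagPathCost, diagPathCost, max_self, max_self, sum_Icc_succ_top (by omega), min_self]
  congr 1
  refine sum_congr rfl fun t ht => ?_
  have := (mem_Icc.1 ht).2
  rw [min_eq_left (by omega : t ≤ i + 1), min_eq_left this]

lemma diagPathCost_succ_left_sub (hij : i < j) :
    diagPathCost a b (i + 1) j - diagPathCost a b i j =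
      ∑ t ∈ Ico (i + 1) (j + 1), ((a (i + 1) - b t) ^ 2 - (a i - b t) ^ 2) := by
  rw [diagPathCost, diagPathCost, max_eq_right hij, max_eq_right hij.le, ← sum_sub_distrib,
    ← Ico_add_one_right_eq_Icc, ← sum_Ico_consecutive _ (by omega : 1 ≤ i + 1) (by omega),
    sum_eq_zero fun t ht => ?_, zero_add]
  · refine sum_congr rfl fun t ht => ?_
    obtain ⟨ht₁, ht₂⟩ := mem_Ico.1 ht
    rw [min_eq_right (by omega : i + 1 ≤ t), min_eq_right (by omega : i ≤ t),
      min_eq_left (by omega : t ≤ j)]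
  · obtain ⟨-, ht⟩ := mem_Ico.1 ht
    rw [min_eq_left (by omega : t ≤ i + 1), min_eq_left (by omega : t ≤ i), sub_self]

lemma diagPathCost_succ_right_sub (hji : j < i) :
    diagPathCost a b i (j + 1) - diagPathCost a b i j =
      ∑ t ∈ Ico (j + 1) (i + 1), ((a t - b (j + 1)) ^ 2 - (a t - b j) ^ 2) := by
  rw [diagPathCost_swap a b, diagPathCost_swap a b, diagPathCost_succ_left_sub hji]
  exact sum_congr rfl fun t _ => by simp only [Pi.neg_apply]; ring

lemma diagPathCost_succ_left_le (hij : i < j) (ha : a (i + 1) ≤ a i)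
    (hb : ∀ t ∈ Ico (i + 1) (j + 1), b t ≤ a (i + 1)) :
    diagPathCost a b (i + 1) j ≤ diagPathCost a b i j := by
  rw [← sub_nonpos, diagPathCost_succ_left_sub hij]
  exact sum_nonpos fun t ht =>
    sub_nonpos.2 (pow_le_pow_left₀ (sub_nonneg.2 (hb t ht)) (by linarith) 2)

lemma diagPathCost_succ_left_sub_tail (hij : i < j) :
    (diagPathCost a b (i + 1) (j + 1) - diagPathCost a b i (j + 1)) -
      (diagPathCost a (fun t => b (t + 1)) (i + 1) j - diagPathCost a (fun t => b (t + 1)) i j) =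
    (a (i + 1) - b (i + 1)) ^ 2 - (a i - b (i + 1)) ^ 2 := by
  rw [diagPathCost_succ_left_sub (by omega), diagPathCost_succ_left_sub hij,
    sum_Ico_add' (fun t => (a (i + 1) - b t) ^ 2 - (a i - b t) ^ 2),
    sum_eq_sum_Ico_succ_bot (by omega : i + 1 < j + 1 + 1)]
  ring

lemma diagPathCost_succ_right_sub_tail (hji : j + 1 < i) :
    (diagPathCost a b i (j + 2) - diagPathCost a b i (j + 1)) -
      (diagPathCost a (fun t => b (t + 1)) i (j + 1) - diagPathCost a (fun t => b (t + 1)) i j) =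
    (a (j + 1) - b (j + 1)) ^ 2 - (a (j + 1) - b (j + 2)) ^ 2 := by
  rw [diagPathCost_succ_right_sub hji, diagPathCost_succ_right_sub (by omega),
    sum_eq_sum_Ico_succ_bot (by omega : j + 1 < i + 1)]
  ring

lemma diagPathCost_succ_succ_eq_min_of_lt (hij : i < j) (ha : a (i + 1) ≤ a i)
    (hb : ∀ t ∈ Ico (i + 1) (j + 1), b t ≤ a (i + 1)) :
    diagPathCost a b (i + 1) (j + 1) =
      min (min (diagPathCost a b (i + 1) j) (diagPathCost a b i (j + 1))) (diagPathCost a b i j) +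
        (a (i + 1) - b (j + 1)) ^ 2 := by
  have hleft := diagPathCost_succ_left_le hij ha hb
  have hright : diagPathCost a b i j ≤ diagPathCost a b i (j + 1) := by
    rw [diagPathCost_succ_right hij.le]
    exact le_add_of_nonneg_right (sq_nonneg _)
  rw [min_eq_left (hleft.trans hright), min_eq_left hleft, diagPathCost_succ_right hij]

lemma diagPathCost_succ_succ_eq_min_of_gt (hji : j < i) (hb : b j ≤ b (j + 1))
    (ha : ∀ t ∈ Ico (j + 1) (i + 1), b (j + 1) ≤ a t) :
    diagPathCost a b (i + 1) (j + 1) =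
      min (min (diagPathCost a b (i + 1) j) (diagPathCost a b i (j + 1))) (diagPathCost a b i j) +
        (a (i + 1) - b (j + 1)) ^ 2 := by
  simp only [diagPathCost_swap a b]
  rw [min_comm (diagPathCost _ _ j (i + 1)),
    diagPathCost_succ_succ_eq_min_of_lt hji (by simpa using hb) (by simpa using ha)]
  simp only [Pi.neg_apply]
  ring

lemma diagPathCost_succ_succ_eq_min_self :
    diagPathCost a b (i + 1) (i + 1) =
      min (min (diagPathCost a b (i + 1) i) (diagPathCost a b i (i + 1))) (diagPathCost a b i i) +
        (a (i + 1) - b (i + 1)) ^ 2 := by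
  rw [min_eq_right (le_min ?_ ?_), diagPathCost_succ_succ]
  · rw [diagPathCost_succ_left le_rfl]
    exact le_add_of_nonneg_right (sq_nonneg _)
  · rw [diagPathCost_succ_right le_rfl]
    exact le_add_of_nonneg_right (sq_nonneg _)

end diagPathCost

theorem DTWTable.eqOn {a b : ℕ → ℝ} {m n : ℕ} {D E : ℕ → ℕ → ℝ}
    (hD : DTWTable a b m n D) (hE : DTWTable a b m n E) :
    ∀ i ∈ Set.Icc 1 m, ∀ j ∈ Set.Icc 1 n, D i j = E i j := by
  obtain ⟨hD₁₁, hDcol, hDrow, hD⟩ := hD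
  obtain ⟨hE₁₁, hEcol, hErow, hE⟩ := hE
  intro i ⟨hi₀, him⟩
  induction i using Nat.strong_induction_on with | _ i ihi => ?_
  intro j ⟨hj₀, hjn⟩
  induction j using Nat.strong_induction_on with | _ j ihj => ?_
  rcases hi₀.eq_or_lt with rfl | hi₁ <;> rcases hj₀.eq_or_lt with rfl | hj₁
  · rw [hD₁₁, hE₁₁]
  · rw [hDrow j hj₁ hjn, hErow j hj₁ hjn, ihj (j - 1) (by omega) (by omega) (by omega)]
  · rw [hDcol i hi₁ him, hEcol i hi₁ him,
      ihi (i - 1) (by omega) (by omega) (by omega) 1 ⟨le_rfl, hjn⟩]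
  · rw [hD i j hi₁ him hj₁ hjn, hE i j hi₁ him hj₁ hjn,
      ihj (j - 1) (by omega) (by omega) (by omega),
      ihi (i - 1) (by omega) (by omega) (by omega) j ⟨hj₀, hjn⟩,
      ihi (i - 1) (by omega) (by omega) (by omega) (j - 1) ⟨by omega, by omega⟩]

section Runs

variable {β : Type*} {f g : ℕ → β} {k M : ℕ}

lemma eq_of_eq_comp_div_mul (hk : 0 < k)
    (hf : ∀ i, 1 ≤ i → i ≤ k * M → f i = g ((i + k - 1) / k)) {I : ℕ} (hI : 1 ≤ I)
    (hIM : I ≤ M) : f (I * k) = g I := by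
  rw [hf _ (Nat.mul_pos hI hk) (by rw [mul_comm]; gcongr),
    (Nat.div_eq_iff hk).2 (by omega : I * k ≤ I * k + k - 1 ∧ _)]

lemma eq_of_eq_comp_div_mul_add_one (hk : 0 < k)
    (hf : ∀ i, 1 ≤ i → i ≤ k * M → f i = g ((i + k - 1) / k)) {I : ℕ} (hIM : I < M) :
    f (I * k + 1) = g (I + 1) := by
  have hle : (I + 1) * k ≤ k * M := by rw [mul_comm]; gcongr; omega
  rw [add_one_mul] at hle
  rw [hf _ le_add_self (by omega), (Nat.div_eq_iff hk).2
    (by rw [add_one_mul]; omega : (I + 1) * k ≤ I * k + 1 + k - 1 ∧ _)]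

variable [Preorder β]

lemma antitoneOn_Icc_of_succ_lt (hg : ∀ I, 1 ≤ I → I < M → g (I + 1) < g I) :
    AntitoneOn g (Set.Icc 1 M) :=
  antitoneOn_of_succ_le Set.ordConnected_Icc fun I _ hI hI' => by
    simpa using (hg I hI.1 (by simpa using hI'.2)).le

lemma monotoneOn_Icc_of_lt_succ (hg : ∀ I, 1 ≤ I → I < M → g I < g (I + 1)) :
    MonotoneOn g (Set.Icc 1 M) :=
  antitoneOn_Icc_of_succ_lt (β := βᵒᵈ) hg

lemma antitoneOn_of_eq_comp_div (hk : 0 < k) (hg : AntitoneOn g (Set.Icc 1 M))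
    (hf : ∀ i, 1 ≤ i → i ≤ k * M → f i = g ((i + k - 1) / k)) :
    AntitoneOn f (Set.Icc 1 (k * M)) := by
  have hmem : ∀ i ∈ Set.Icc 1 (k * M), (i + k - 1) / k ∈ Set.Icc 1 M := fun i hi =>
    ⟨(Nat.one_le_div_iff hk).2 (by have := hi.1; omega), (ceilDiv_le_iff_le_mul hk).2 hi.2⟩
  intro x hx y hy hxy
  rw [hf x hx.1 hx.2, hf y hy.1 hy.2]
  exact hg (hmem x hx) (hmem y hy) (Nat.div_le_div_right (by omega))

lemma monotoneOn_of_eq_comp_div (hk : 0 < k) (hg : MonotoneOn g (Set.Icc 1 M))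
    (hf : ∀ i, 1 ≤ i → i ≤ k * M → f i = g ((i + k - 1) / k)) :
    MonotoneOn f (Set.Icc 1 (k * M)) :=
  antitoneOn_of_eq_comp_div (β := βᵒᵈ) hk hg hf

end Runs

def rowWitnesses (k n M : ℕ) : Finset (ℕ × ℕ) :=
  (Icc 1 (M - 1)).biUnion fun I => {I * k + 1} ×ˢ Icc (I * k + 2) (n - 1)

def colWitnesses (l m N : ℕ) : Finset (ℕ × ℕ) :=
  (Icc 1 (N - 1)).biUnion fun J => Icc (J * l + 1) m ×ˢ {J * l}

section Witnesses

variable {k l m n M N i j : ℕ}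

lemma mem_rowWitnesses : (i, j) ∈ rowWitnesses k n M ↔
    ∃ I ∈ Icc 1 (M - 1), I * k + 2 ≤ j ∧ j ≤ n - 1 ∧ I * k + 1 = i := by
  simp [rowWitnesses, and_assoc]

lemma mem_colWitnesses : (i, j) ∈ colWitnesses l m N ↔
    ∃ J ∈ Icc 1 (N - 1), J * l < i ∧ i ≤ m ∧ J * l = j := by
  simp [colWitnesses, and_assoc]

lemma card_rowWitnesses (hk : 0 < k) :
    (rowWitnesses k n M).card = ∑ I ∈ Icc 1 (M - 1), (n - 2 - I * k) := by
  rw [rowWitnesses, card_biUnion fun I _ I' _ hne => ?_]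
  · refine sum_congr rfl fun I _ => ?_
    rw [card_product, card_singleton, Nat.card_Icc, one_mul]
    omega
  · exact disjoint_product.2 <| Or.inl <| disjoint_singleton.2 fun h =>
      hne (Nat.eq_of_mul_eq_mul_right hk (by omega))

lemma card_colWitnesses (hl : 0 < l) :
    (colWitnesses l m N).card = ∑ J ∈ Icc 1 (N - 1), (m - J * l) := by
  rw [colWitnesses, card_biUnion fun J _ J' _ hne => ?_]
  · refine sum_congr rfl fun J _ => ?_
    rw [card_product, card_singleton, Nat.card_Icc, mul_one]
    omega
  · exact disjoint_product.2 <| Or.inr <| disjoint_singleton.2 fun h =>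
      hne (Nat.eq_of_mul_eq_mul_right hl h)

lemma disjoint_rowWitnesses_colWitnesses :
    Disjoint (rowWitnesses k n M) (colWitnesses l m N) := by
  rw [disjoint_left]
  rintro ⟨i, j⟩ hrow hcol
  obtain ⟨I, -, hj, -, rfl⟩ := mem_rowWitnesses.1 hrow
  obtain ⟨J, -, hi, -, rfl⟩ := mem_colWitnesses.1 hcol
  omega

end Witnesses

def changedCells (D D' : ℕ → ℕ → ℝ) (m n : ℕ) : Set (ℕ × ℕ) :=
  {p : ℕ × ℕ | 2 ≤ p.1 ∧ p.1 ≤ m ∧ 2 ≤ p.2 ∧ p.2 ≤ n - 1 ∧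
    (D p.1 (p.2 + 1) - D (p.1 - 1) (p.2 + 1) ≠ D' p.1 p.2 - D' (p.1 - 1) p.2 ∨
     D p.1 (p.2 + 1) - D p.1 p.2 ≠ D' p.1 p.2 - D' p.1 (p.2 - 1))}

lemma card_le_ncard_changedCells {D D' : ℕ → ℕ → ℝ} {m n : ℕ} {s : Finset (ℕ × ℕ)}
    (hs : ↑s ⊆ changedCells D D' m n) : s.card ≤ (changedCells D D' m n).ncard :=
  Set.ncard_coe_finset s ▸ Set.ncard_le_ncard hs ((Set.finite_Icc (2, 2) (m, n - 1)).subset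
    fun _ hp => ⟨⟨hp.1, hp.2.2.1⟩, ⟨hp.2.1, hp.2.2.2.1⟩⟩)

section Sorted

variable {a b : ℕ → ℝ} {m n : ℕ} {D D' : ℕ → ℕ → ℝ}

theorem dtwTable_diagPathCost (ha : AntitoneOn a (Set.Icc 1 m)) (hb : MonotoneOn b (Set.Icc 1 n))
    (hab : ∀ i ∈ Set.Icc 1 m, ∀ j ∈ Set.Icc 1 n, b j ≤ a i) :
    DTWTable a b m n (diagPathCost a b) := by
  refine ⟨diagPathCost_one_one, fun i hi _ => ?_, fun j hj _ => ?_,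
    fun i j hi him hj hjn => ?_⟩
  · obtain ⟨i, rfl⟩ : ∃ i', i = i' + 1 := ⟨i - 1, by omega⟩
    exact diagPathCost_succ_left (by omega)
  · obtain ⟨j, rfl⟩ : ∃ j', j = j' + 1 := ⟨j - 1, by omega⟩
    exact diagPathCost_succ_right (by omega)
  obtain ⟨i, rfl⟩ : ∃ i', i = i' + 1 := ⟨i - 1, by omega⟩
  obtain ⟨j, rfl⟩ : ∃ j', j = j' + 1 := ⟨j - 1, by omega⟩
  rw [Nat.add_sub_cancel, Nat.add_sub_cancel]
  rcases lt_trichotomy i j with hij | rfl | hji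
  · refine diagPathCost_succ_succ_eq_min_of_lt hij
      (ha ⟨by omega, by omega⟩ ⟨by omega, him⟩ (by omega)) fun t ht => hab _ ⟨by omega, him⟩ _ ?_
    obtain ⟨_, _⟩ := mem_Ico.1 ht
    exact ⟨by omega, by omega⟩
  · exact diagPathCost_succ_succ_eq_min_self
  · refine diagPathCost_succ_succ_eq_min_of_gt hji
      (hb ⟨by omega, by omega⟩ ⟨by omega, hjn⟩ (by omega)) fun t ht => hab _ ?_ _ ⟨by omega, hjn⟩
    obtain ⟨_, _⟩ := mem_Ico.1 ht
    exact ⟨by omega, by omega⟩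

theorem DTWTable.eq_diagPathCost (hD : DTWTable a b m n D) (ha : AntitoneOn a (Set.Icc 1 m))
    (hb : MonotoneOn b (Set.Icc 1 n)) (hab : ∀ i ∈ Set.Icc 1 m, ∀ j ∈ Set.Icc 1 n, b j ≤ a i) :
    ∀ i ∈ Set.Icc 1 m, ∀ j ∈ Set.Icc 1 n, D i j = diagPathCost a b i j :=
  hD.eqOn (dtwTable_diagPathCost ha hb hab)

theorem DTWTable.eq_diagPathCost_tail (hD' : DTWTable a (fun j => b (j + 1)) m (n - 1) D')
    (ha : AntitoneOn a (Set.Icc 1 m)) (hb : MonotoneOn b (Set.Icc 1 n))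
    (hab : ∀ i ∈ Set.Icc 1 m, ∀ j ∈ Set.Icc 1 n, b j ≤ a i) :
    ∀ i ∈ Set.Icc 1 m, ∀ j ∈ Set.Icc 1 (n - 1),
      D' i j = diagPathCost a (fun j => b (j + 1)) i j :=
  hD'.eq_diagPathCost ha
    (fun x ⟨_, hx⟩ y ⟨_, hy⟩ hxy => hb ⟨by omega, by omega⟩ ⟨by omega, by omega⟩ (by omega))
    fun i hi j ⟨hj₁, hj₂⟩ => hab i hi (j + 1) ⟨by omega, by omega⟩

theorem DTWTable.row_increment_ne_tail (hD : DTWTable a b m n D)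
    (hD' : DTWTable a (fun j => b (j + 1)) m (n - 1) D') (ha : AntitoneOn a (Set.Icc 1 m))
    (hb : MonotoneOn b (Set.Icc 1 n)) (hab : ∀ i ∈ Set.Icc 1 m, ∀ j ∈ Set.Icc 1 n, b j ≤ a i)
    {i j : ℕ} (hi : 2 ≤ i) (him : i ≤ m) (hij : i ≤ j) (hjn : j + 1 ≤ n)
    (hdrop : a i < a (i - 1)) :
    D i (j + 1) - D (i - 1) (j + 1) ≠ D' i j - D' (i - 1) j := by
  obtain ⟨i, rfl⟩ : ∃ i', i = i' + 1 := ⟨i - 1, by omega⟩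
  rw [Nat.add_sub_cancel] at hdrop ⊢
  have hDP := hD.eq_diagPathCost ha hb hab
  have hD'P := hD'.eq_diagPathCost_tail ha hb hab
  rw [hDP _ ⟨by omega, him⟩ _ ⟨by omega, hjn⟩,
    hDP _ ⟨by omega, by omega⟩ _ ⟨by omega, hjn⟩,
    hD'P _ ⟨by omega, him⟩ _ ⟨by omega, by omega⟩,
    hD'P _ ⟨by omega, by omega⟩ _ ⟨by omega, by omega⟩, ← sub_ne_zero,
    diagPathCost_succ_left_sub_tail hij]
  have hpos := sub_nonneg.2
    (hab (i + 1) ⟨by omega, him⟩ (i + 1) ⟨by omega, by omega⟩)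
  exact (sub_neg.2 (pow_lt_pow_left₀ (by linarith) hpos two_ne_zero)).ne

theorem DTWTable.col_increment_ne_tail (hD : DTWTable a b m n D)
    (hD' : DTWTable a (fun j => b (j + 1)) m (n - 1) D') (ha : AntitoneOn a (Set.Icc 1 m))
    (hb : MonotoneOn b (Set.Icc 1 n)) (hab : ∀ i ∈ Set.Icc 1 m, ∀ j ∈ Set.Icc 1 n, b j ≤ a i)
    {i j : ℕ} (hj : 2 ≤ j) (hji : j < i) (him : i ≤ m) (hjn : j + 1 ≤ n)
    (hrise : b j < b (j + 1)) :
    D i (j + 1) - D i j ≠ D' i j - D' i (j - 1) := by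
  obtain ⟨j, rfl⟩ : ∃ j', j = j' + 1 := ⟨j - 1, by omega⟩
  rw [Nat.add_sub_cancel]
  have hDP := hD.eq_diagPathCost ha hb hab
  have hD'P := hD'.eq_diagPathCost_tail ha hb hab
  rw [hDP _ ⟨by omega, him⟩ _ ⟨by omega, hjn⟩,
    hDP _ ⟨by omega, him⟩ _ ⟨by omega, by omega⟩,
    hD'P _ ⟨by omega, him⟩ _ ⟨by omega, by omega⟩,
    hD'P _ ⟨by omega, him⟩ _ ⟨by omega, by omega⟩, ← sub_ne_zero,
    diagPathCost_succ_right_sub_tail hji]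
  have hpos := sub_nonneg.2
    (hab (j + 1) ⟨by omega, by omega⟩ (j + 2) ⟨by omega, hjn⟩)
  exact (sub_pos.2 (pow_lt_pow_left₀ (by linarith) hpos two_ne_zero)).ne'

theorem DTWTable.rowWitnesses_subset_changedCells {k M : ℕ} (hk : 0 < k)
    (hD : DTWTable a b (k * M) n D) (hD' : DTWTable a (fun j => b (j + 1)) (k * M) (n - 1) D')
    (ha : AntitoneOn a (Set.Icc 1 (k * M))) (hb : MonotoneOn b (Set.Icc 1 n))
    (hab : ∀ i ∈ Set.Icc 1 (k * M), ∀ j ∈ Set.Icc 1 n, b j ≤ a i)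
    (hdrop : ∀ I ∈ Icc 1 (M - 1), a (I * k + 1) < a (I * k)) :
    ↑(rowWitnesses k n M) ⊆ changedCells D D' (k * M) n := by
  rintro ⟨i, j⟩ hp
  obtain ⟨I, hI, hj, hjn, rfl⟩ := mem_rowWitnesses.1 hp
  obtain ⟨hI₁, hIM⟩ : 1 ≤ I ∧ I < M := by rw [mem_Icc] at hI; omega
  have hIk : 1 ≤ I * k := by nlinarith
  have hIkM : I * k + k ≤ k * M := by nlinarith
  refine ⟨by omega, by omega, by omega, hjn, Or.inl <| hD.row_increment_ne_tail hD' ha hb hab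
    (by omega) (by omega) (by omega) (by omega) ?_⟩
  rw [Nat.add_sub_cancel]
  exact hdrop I hI

theorem DTWTable.colWitnesses_subset_changedCells {l N : ℕ} (hl : 2 ≤ l)
    (hD : DTWTable a b m (l * N) D) (hD' : DTWTable a (fun j => b (j + 1)) m (l * N - 1) D')
    (ha : AntitoneOn a (Set.Icc 1 m)) (hb : MonotoneOn b (Set.Icc 1 (l * N)))
    (hab : ∀ i ∈ Set.Icc 1 m, ∀ j ∈ Set.Icc 1 (l * N), b j ≤ a i)
    (hrise : ∀ J ∈ Icc 1 (N - 1), b (J * l) < b (J * l + 1)) :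
    ↑(colWitnesses l m N) ⊆ changedCells D D' m (l * N) := by
  rintro ⟨i, j⟩ hp
  obtain ⟨J, hJ, hi, him, rfl⟩ := mem_colWitnesses.1 hp
  obtain ⟨hJ₁, hJN⟩ : 1 ≤ J ∧ J < N := by rw [mem_Icc] at hJ; omega
  have hJl : 2 ≤ J * l := by nlinarith
  have hJlN : J * l + l ≤ l * N := by nlinarith
  exact ⟨by omega, him, hJl, by omega, Or.inr <| hD.col_increment_ne_tail hD' ha hb hab
    hJl hi him (by omega) (hrise J hJ)⟩

end Sorted

theorem stmt_15 (k l M N : ℕ) (hk : 1 ≤ k) (hl : 2 ≤ l) (hM : 1 ≤ M) (hN : 1 ≤ N)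
    (α β : ℕ → ℝ)
    (hα : ∀ I, 1 ≤ I → I < M → α (I + 1) < α I)
    (hβ : ∀ J, 1 ≤ J → J < N → β J < β (J + 1))
    (hαβ : β N < α M)
    (a b : ℕ → ℝ)
    (ha : ∀ i, 1 ≤ i → i ≤ k * M → a i = α ((i + k - 1) / k))
    (hb : ∀ j, 1 ≤ j → j ≤ l * N → b j = β ((j + l - 1) / l))
    (D D' : ℕ → ℕ → ℝ)
    (hD : DTWTable a b (k * M) (l * N) D)
    (hD' : DTWTable a (fun j => b (j + 1)) (k * M) (l * N - 1) D') :
    (∑ I ∈ Finset.Icc 1 (M - 1), (l * N - 2 - I * k)) +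
      (∑ J ∈ Finset.Icc 1 (N - 1), (k * M - J * l)) ≤
    {p : ℕ × ℕ | 2 ≤ p.1 ∧ p.1 ≤ k * M ∧ 2 ≤ p.2 ∧ p.2 ≤ l * N - 1 ∧
      (D p.1 (p.2 + 1) - D (p.1 - 1) (p.2 + 1) ≠ D' p.1 p.2 - D' (p.1 - 1) p.2 ∨
       D p.1 (p.2 + 1) - D p.1 p.2 ≠ D' p.1 p.2 - D' p.1 (p.2 - 1))}.ncard := by
  have hl₀ : 0 < l := by omega
  have haA := antitoneOn_of_eq_comp_div hk (antitoneOn_Icc_of_succ_lt hα) ha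
  have hbM := monotoneOn_of_eq_comp_div hl₀ (monotoneOn_Icc_of_lt_succ hβ) hb
  have hbN : b (l * N) = β N := mul_comm N l ▸ eq_of_eq_comp_div_mul hl₀ hb hN le_rfl
  have haM : a (k * M) = α M := mul_comm M k ▸ eq_of_eq_comp_div_mul hk ha hM le_rfl
  have hab : ∀ i ∈ Set.Icc 1 (k * M), ∀ j ∈ Set.Icc 1 (l * N), b j ≤ a i := fun i hi j hj =>
    calc b j ≤ b (l * N) := hbM hj ⟨hj.1.trans hj.2, le_rfl⟩ hj.2
      _ ≤ a (k * M) := (hbN ▸ haM ▸ hαβ).le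
      _ ≤ a i := haA hi ⟨hi.1.trans hi.2, le_rfl⟩ hi.2
  have hdrop : ∀ I ∈ Icc 1 (M - 1), a (I * k + 1) < a (I * k) := fun I hI => by
    obtain ⟨hI₁, hIM⟩ : 1 ≤ I ∧ I < M := by rw [mem_Icc] at hI; omega
    rw [eq_of_eq_comp_div_mul_add_one hk ha hIM, eq_of_eq_comp_div_mul hk ha hI₁ hIM.le]
    exact hα I hI₁ hIM
  have hrise : ∀ J ∈ Icc 1 (N - 1), b (J * l) < b (J * l + 1) := fun J hJ => by
    obtain ⟨hJ₁, hJN⟩ : 1 ≤ J ∧ J < N := by rw [mem_Icc] at hJ; omega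
    rw [eq_of_eq_comp_div_mul hl₀ hb hJ₁ hJN.le, eq_of_eq_comp_div_mul_add_one hl₀ hb hJN]
    exact hβ J hJ₁ hJN
  calc _ = (rowWitnesses k (l * N) M ∪ colWitnesses l (k * M) N).card := by
        rw [card_union_of_disjoint disjoint_rowWitnesses_colWitnesses, card_rowWitnesses hk,
          card_colWitnesses hl₀]
    _ ≤ (changedCells D D' (k * M) (l * N)).ncard := by
      refine card_le_ncard_changedCells ?_
      rw [coe_union]
      exact Set.union_subset (hD.rowWitnesses_subset_changedCells hk hD' haA hbM hab hdrop)
        (hD.colWitnesses_subset_changedCells hl hD' haA hbM hab hrise)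
end
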